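/- Let C be a Calabi–Yau triangulated category of CY-dimension 2 with a cluster-tilting object T and let Γ = End_C(T) be the endomorphism algebra of T in C. If L is a tilting Γ-module, then the endomorphism algebra End_Γ(L)^op is a quotient of End_C(L)^op, the endomorphism algebra in C of the object of C corresponding to L under the equivalence C/add(ST) ≃ mod Γ. -/

import Mathlib

set_option linter.unusedVariables false
set_option linter.unusedSectionVars false

open CategoryTheory Limits Pretriangulated

universe v u u₂

namespace CYPaper

section ModuleDefs
variable (R : Type v) [Ring R]

/-- `Ext¹_R(M,N) = 0`: every short exact sequence `0 → N → E → M → 0` of `R`-modules splits. -/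
def Ext1Zero (M N : ModuleCat.{v} R) : Prop :=
  ∀ (E : ModuleCat.{v} R) (f : N ⟶ E) (g : E ⟶ M),
    Function.Injective f → Function.Surjective g → LinearMap.range f.hom = LinearMap.ker g.hom →
    ∃ s : M ⟶ E, s ≫ g = 𝟙 M

/-- `M` has projective dimension at most one: it admits a projective resolution
`0 → P₁ → P₀ → M → 0`. -/
def PdLeOne (M : ModuleCat.{v} R) : Prop :=
  ∃ (P₀ P₁ : ModuleCat.{v} R) (f : P₁ ⟶ P₀) (g : P₀ ⟶ M),
    Module.Projective R P₀ ∧ Module.Projective R P₁ ∧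
    Function.Injective f ∧ Function.Surjective g ∧ LinearMap.range f.hom = LinearMap.ker g.hom

/-- `M` belongs to `add L`: it is a direct summand of a finite direct sum of copies of `L`. -/
def MemAdd (L M : ModuleCat.{v} R) : Prop :=
  ∃ (n : ℕ) (s : M ⟶ ModuleCat.of R (Fin n → L)) (r : ModuleCat.of R (Fin n → L) ⟶ M),
    s ≫ r = 𝟙 M

/-- `L` is a tilting `R`-module: `pd L ≤ 1`, `Ext¹(L,L) = 0`, and there is an exact
sequence `0 → R → L⁰ → L¹ → 0` with `L⁰, L¹ ∈ add L`. -/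
def IsTiltingModule (L : ModuleCat.{v} R) : Prop :=
  PdLeOne R L ∧ Ext1Zero R L L ∧
  ∃ (L₀ L₁ : ModuleCat.{v} R) (a : ModuleCat.of R R ⟶ L₀) (b : L₀ ⟶ L₁),
    MemAdd R L L₀ ∧ MemAdd R L L₁ ∧
    Function.Injective a ∧ Function.Surjective b ∧ LinearMap.range a.hom = LinearMap.ker b.hom

end ModuleDefs

section Triangulated
variable (k : Type*) [Field k]
variable (C : Type u) [Category.{v} C] [Preadditive C] [Linear k C]
  [HasZeroObject C] [HasShift C ℤ] [∀ n : ℤ, (shiftFunctor C n).Additive]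
  [Pretriangulated C] [IsTriangulated C]
  [IsIdempotentComplete C] [HasFiniteBiproducts C]
  [∀ X Y : C, FiniteDimensional k (X ⟶ Y)]

/-- The data of a Serre functor on the `k`-linear category `C`: an autoequivalence `Fun`
together with bifunctorial isomorphisms `Hom(X,Y) ≅ D Hom(Y, Fun X)`. -/
structure SerreData where
  Fun : C ⥤ C
  isEquiv : Fun.IsEquivalence
  eta : ∀ X Y : C, (X ⟶ Y) ≃ₗ[k] Module.Dual k (Y ⟶ Fun.obj X)
  nat_left : ∀ {X X' Y : C} (f : X' ⟶ X) (φ : X ⟶ Y) (g : Y ⟶ Fun.obj X'),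
    eta X' Y (f ≫ φ) g = eta X Y φ (g ≫ Fun.map f)
  nat_right : ∀ {X Y Y' : C} (φ : X ⟶ Y) (h : Y ⟶ Y') (g : Y' ⟶ Fun.obj X),
    eta X Y' (φ ≫ h) g = eta X Y φ (h ≫ g)

/-- `C` is Calabi–Yau of CY-dimension `2` relative to the Serre functor `S`:
there is an isomorphism of functors `S² ≅ Σ`. -/
def IsCY2 (S : SerreData k C) : Prop := Nonempty (shiftFunctor C (2 : ℤ) ≅ S.Fun)

variable {C}

/-- `X` belongs to `add T`: it is a direct summand of a finite direct sum of copies of `T`. -/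
def inAdd (T X : C) : Prop :=
  ∃ (n : ℕ) (s : X ⟶ ⨁ (fun _ : Fin n => T)) (r : (⨁ fun _ : Fin n => T) ⟶ X),
    s ≫ r = 𝟙 X

/-- `T` is a cluster-tilting object of `C`: `Ext¹(T,T) = 0` and any object `X` with
`Hom(X, ST) = 0` lies in `add T`. -/
def IsClusterTilting (T : C) : Prop :=
  (∀ f : T ⟶ T⟦(1 : ℤ)⟧, f = 0) ∧
  ∀ X : C, (∀ f : X ⟶ T⟦(1 : ℤ)⟧, f = 0) → inAdd T X

/-- `Hom(T,X)` is a right module over `Γ = End T`, i.e. a left module over `(End T)ᵐᵒᵖ`,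
by precomposition. -/
instance homModule (T X : C) : Module (End T)ᵐᵒᵖ (T ⟶ X) where
  smul φ f := φ.unop ≫ f
  one_smul f := Category.id_comp f
  mul_smul a b f := Category.assoc a.unop b.unop f
  smul_zero a := comp_zero
  smul_add a f g := Preadditive.comp_add _ _ _ _ _ _
  add_smul a b f := Preadditive.add_comp _ _ _ _ _ _
  zero_smul f := zero_comp

/-- The functor `F = Hom_C(T,−) : C ⥤ mod Γ`, where `Γ = End T` and `mod Γ` is realized
as (left) modules over `(End T)ᵐᵒᵖ` (i.e. right `End T`-modules). -/
def homFunctor (T : C) : C ⥤ ModuleCat.{v} (End T)ᵐᵒᵖ where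
  obj X := ModuleCat.of _ (T ⟶ X)
  map f :=
    ModuleCat.ofHom
    { toFun := fun g => g ≫ f
      map_add' := fun g h => Preadditive.add_comp _ _ _ _ _ _
      map_smul' := fun a g => Category.assoc a.unop g f }
  map_id X := by ext g; exact Category.comp_id g
  map_comp f g := by ext h; exact (Category.assoc _ _ _).symm

end Triangulated

/-! `Hom(T, -)` is full, so `End_C(L⁺) → End_Γ(L)` is a surjective ring map. To lift
`α : Hom(T, X) → Hom(T, Y)`, take a right `add T`-approximation `p : Tⁿ → X` and complete it to a
triangle `Z⟦-1⟧ → Tⁿ → X → Z`. As `Ext¹(T, T) = 0` and `p` is an approximation, `Hom(T, Z) = 0`;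
by Serre duality and the 2-CY property `Hom(Z⟦-1⟧, T⟦1⟧) ≅ D Hom(T, Z) = 0`, so `Z⟦-1⟧ ∈ add T`.
The map `Tⁿ → Y` induced by `α` then vanishes on `Z⟦-1⟧`, hence factors through `p`. -/

section Preadditive
variable {C : Type u} [Category.{v} C] [Preadditive C] [HasFiniteBiproducts C]

theorem hom_obj_biproduct_eq_zero {D : Type u₂} [Category.{v} D] [Preadditive D] (G : C ⥤ D)
    [G.Additive] {X : D} {Y : C} {J : Type} [Finite J] (h : ∀ f : X ⟶ G.obj Y, f = 0)
    (f : X ⟶ G.obj (⨁ fun _ : J => Y)) : f = 0 := by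
  have := Fintype.ofFinite J
  rw [← Category.comp_id f, ← G.map_id, ← biproduct.total, G.map_sum, Preadditive.comp_sum]
  refine Finset.sum_eq_zero fun j _ => ?_
  rw [G.map_comp, ← Category.assoc, h (f ≫ G.map _), zero_comp]

theorem inAdd.eq_zero_of_comp_eq_zero {T W Y : C} (hW : inAdd T W) {g : W ⟶ Y}
    (h : ∀ u : T ⟶ W, u ≫ g = 0) : g = 0 := by
  obtain ⟨n, s, r, hsr⟩ := hW
  have hrg : r ≫ g = 0 := biproduct.hom_ext' _ _ fun j => by
    rw [comp_zero, ← Category.assoc, h]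
  rw [← Category.id_comp g, ← hsr, Category.assoc, hrg, comp_zero]

theorem exists_biproduct_approximation (k : Type*) [Field k] [Linear k C] (T X : C)
    [FiniteDimensional k (T ⟶ X)] :
    ∃ (n : ℕ) (p : (⨁ fun _ : Fin n => T) ⟶ X), ∀ h : T ⟶ X, ∃ s, s ≫ p = h := by
  let b := Module.finBasis k (T ⟶ X)
  refine ⟨_, biproduct.desc fun i => b i,
    fun h => ⟨∑ i, b.repr h i • biproduct.ι (fun _ => T) i, ?_⟩⟩
  simp only [Preadditive.sum_comp, Linear.smul_comp, biproduct.ι_desc]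
  exact b.sum_repr h

end Preadditive

theorem SerreData.eq_zero_of_forall_eq_zero {k : Type*} [Field k] {C : Type u} [Category.{v} C]
    [Preadditive C] [Linear k C] (S : SerreData k C) {X Y : C}
    (h : ∀ g : Y ⟶ S.Fun.obj X, g = 0) (f : X ⟶ Y) : f = 0 :=
  (S.eta X Y).injective <| LinearMap.ext fun g => by rw [h g, map_zero, map_zero]

section Pretriangulated
variable {C : Type u} [Category.{v} C] [Preadditive C] [HasZeroObject C] [HasShift C ℤ]
  [∀ n : ℤ, (shiftFunctor C n).Additive] [Pretriangulated C]

theorem IsCY2.eq_zero_of_forall_hom_eq_zero {k : Type*} [Field k] [Linear k C]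
    {S : SerreData k C} (hCY : IsCY2 k C S) {X Y : C} (h : ∀ u : X ⟶ Y, u = 0)
    (f : Y⟦(-1 : ℤ)⟧ ⟶ X⟦(1 : ℤ)⟧) : f = 0 := by
  obtain ⟨ε⟩ := hCY
  refine S.eq_zero_of_forall_eq_zero (fun g => ?_) f
  let e : Y⟦(1 : ℤ)⟧ ≅ S.Fun.obj (Y⟦(-1 : ℤ)⟧) :=
    (shiftFunctorAdd' C (-1) 2 1 (by norm_num)).app Y ≪≫ ε.app _
  obtain ⟨u, hu⟩ := (shiftFunctor C (1 : ℤ)).map_surjective (g ≫ e.inv)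
  rw [← cancel_mono e.inv, zero_comp, ← hu, h u, Functor.map_zero]

theorem hom_cone_eq_zero_of_approximation [HasFiniteBiproducts C] {T X Z : C}
    (hT : ∀ f : T ⟶ T⟦(1 : ℤ)⟧, f = 0) {n : ℕ} {p : (⨁ fun _ : Fin n => T) ⟶ X} {q : X ⟶ Z}
    {w : Z ⟶ (⨁ fun _ : Fin n => T)⟦(1 : ℤ)⟧} (hΔ : Triangle.mk p q w ∈ distTriang C)
    (hp : ∀ h : T ⟶ X, ∃ s, s ≫ p = h) (u : T ⟶ Z) : u = 0 := by
  obtain ⟨g, rfl⟩ := Triangle.coyoneda_exact₃ _ hΔ u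
    (hom_obj_biproduct_eq_zero (shiftFunctor C (1 : ℤ)) hT _)
  obtain ⟨s, rfl⟩ := hp g
  have hpq : p ≫ q = 0 := comp_distTriang_mor_zero₁₂ _ hΔ
  show (s ≫ p) ≫ q = 0
  rw [Category.assoc, hpq, comp_zero]

end Pretriangulated

section HomModule
variable {C : Type u} [Category.{v} C] [Preadditive C] {T : C}

instance homFunctor_additive : (homFunctor T).Additive where
  map_add {_ _ _ _} := ModuleCat.hom_ext <| LinearMap.ext fun _ => Preadditive.comp_add _ _ _ _ _ _

theorem linearMap_apply_comp {X Y : C} (α : (T ⟶ X) →ₗ[(End T)ᵐᵒᵖ] (T ⟶ Y)) (u : T ⟶ T)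
    (v : T ⟶ X) : α (u ≫ v) = u ≫ α v :=
  α.map_smul (MulOpposite.op u) v

theorem comp_biproduct_desc_linearMap [HasFiniteBiproducts C] {X Y : C}
    (α : (T ⟶ X) →ₗ[(End T)ᵐᵒᵖ] (T ⟶ Y)) {n : ℕ} (p : (⨁ fun _ : Fin n => T) ⟶ X)
    (h : T ⟶ ⨁ fun _ : Fin n => T) :
    h ≫ biproduct.desc (fun j => α (biproduct.ι (fun _ => T) j ≫ p)) = α (h ≫ p) := by
  have hsum : h ≫ p = ∑ j, (h ≫ biproduct.π _ j) ≫ biproduct.ι (fun _ => T) j ≫ p := by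
    conv_lhs => rw [← Category.id_comp p, ← biproduct.total, ← Category.assoc]
    simp only [Preadditive.comp_sum, Preadditive.sum_comp, Category.assoc]
  rw [hsum, map_sum]
  simp only [linearMap_apply_comp]
  conv_lhs => rw [← Category.comp_id h, ← biproduct.total]
  simp only [Preadditive.comp_sum, Preadditive.sum_comp, Category.assoc, biproduct.ι_desc]

end HomModule

theorem homFunctor_full {k : Type*} [Field k] {C : Type u} [Category.{v} C] [Preadditive C]
    [Linear k C] [HasZeroObject C] [HasShift C ℤ] [∀ n : ℤ, (shiftFunctor C n).Additive]
    [Pretriangulated C] [HasFiniteBiproducts C] [∀ X Y : C, FiniteDimensional k (X ⟶ Y)]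
    {S : SerreData k C} (hCY : IsCY2 k C S) {T : C} (hT : IsClusterTilting T) :
    (homFunctor T).Full where
  map_surjective {X Y} α := by
    obtain ⟨n, p, hp⟩ := exists_biproduct_approximation k T X
    obtain ⟨Z, q, w, hΔ⟩ := distinguished_cocone_triangle p
    have hZ : inAdd T (Z⟦(-1 : ℤ)⟧) :=
      hT.2 _ (hCY.eq_zero_of_forall_hom_eq_zero (hom_cone_eq_zero_of_approximation hT.1 hΔ hp))
    let α' : (T ⟶ X) →ₗ[(End T)ᵐᵒᵖ] (T ⟶ Y) := α.hom
    let g := biproduct.desc fun j => α' (biproduct.ι (fun _ => T) j ≫ p)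
    have hΔ' := inv_rot_of_distTriang _ hΔ
    let r : Z⟦(-1 : ℤ)⟧ ⟶ ⨁ fun _ : Fin n => T := (Triangle.mk p q w).invRotate.mor₁
    have hrp : r ≫ p = 0 := comp_distTriang_mor_zero₁₂ _ hΔ'
    have hrg : r ≫ g = 0 := hZ.eq_zero_of_comp_eq_zero fun u => by
      rw [← Category.assoc, comp_biproduct_desc_linearMap, Category.assoc, hrp, comp_zero,
        map_zero]
    obtain ⟨f, hpf⟩ : ∃ f : X ⟶ Y, g = p ≫ f := Triangle.yoneda_exact₂ _ hΔ' g hrg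
    refine ⟨f, ModuleCat.hom_ext (LinearMap.ext fun h => ?_)⟩
    obtain ⟨s, rfl⟩ := hp h
    show (s ≫ p) ≫ f = α' (s ≫ p)
    rw [Category.assoc, ← hpf, comp_biproduct_desc_linearMap]

section EndRingHom
variable {C : Type u} [Category.{v} C] [Preadditive C] {D : Type u₂} [Category.{v} D]
  [Preadditive D] (G : C ⥤ D) [G.Additive] {X : C} {Y : D} (e : G.obj X ≅ Y)

def endRingHomOfIso : End X →+* End Y :=
  { e.conj.toMonoidHom.comp (G.mapEnd X) with
    map_zero' := by simp [Iso.conj_apply, Functor.mapEnd]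
    map_add' := fun x y => by
      change e.inv ≫ G.map (x + y : X ⟶ X) ≫ e.hom = _
      rw [G.map_add, Preadditive.add_comp, Preadditive.comp_add]
      rfl }

theorem endRingHomOfIso_surjective [G.Full] : Function.Surjective (endRingHomOfIso G e) :=
  e.conj.surjective.comp G.map_surjective

end EndRingHom

/-- **Corollary.** Let `C` be a 2-Calabi–Yau triangulated category with cluster-tilting
object `T` and `Γ = End_C(T)`. If `L` is a tilting `Γ`-module and `L⁺` is the object of `C`
corresponding to `L` under the equivalence `C/add(ST) ≃ mod Γ`, then `End_Γ(L)ᵒᵖ` is a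
quotient of `End_C(L⁺)ᵒᵖ`. -/
theorem end_of_tilting_is_quotient
    {k : Type*} [Field k] [IsAlgClosed k]
    {C : Type u} [Category.{v} C] [Preadditive C] [Linear k C]
    [HasZeroObject C] [HasShift C ℤ] [∀ n : ℤ, (shiftFunctor C n).Additive]
    [Pretriangulated C] [IsTriangulated C]
    [IsIdempotentComplete C] [HasFiniteBiproducts C]
    [∀ X Y : C, FiniteDimensional k (X ⟶ Y)]
    (S : SerreData k C) (hCY : IsCY2 k C S)
    (T : C) (hT : IsClusterTilting T)
    (L : ModuleCat.{v} (End T)ᵐᵒᵖ) [Module.Finite (End T)ᵐᵒᵖ L]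
    (hL : IsTiltingModule (End T)ᵐᵒᵖ L)
    (Lplus : C) (hLift : Nonempty ((homFunctor T).obj Lplus ≅ L)) :
    ∃ φ : (End Lplus)ᵐᵒᵖ →+* (Module.End (End T)ᵐᵒᵖ L)ᵐᵒᵖ, Function.Surjective φ := by
  obtain ⟨e⟩ := hLift
  have hfull : (homFunctor T).Full := homFunctor_full hCY hT
  refine ⟨RingHom.op ((ModuleCat.endRingEquiv L).toRingHom.comp
    (endRingHomOfIso (homFunctor T) e)), ?_⟩
  exact MulOpposite.op_surjective.comp <| ((ModuleCat.endRingEquiv L).surjective.comp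
    (endRingHomOfIso_surjective _ e)).comp MulOpposite.unop_surjective

end CYPaper
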